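/- Let a, b ∈ ℝ. If u : (0,∞)×ℝ → ℝ is twice continuously differentiable and solves u_t = (a·x²·u·u_x)_x + x·u·u_x + u, then for any λ > 0, v(x,t) := u(λ·x, t) also solves the same equation on (0,∞)×ℝ. -/
import Mathlib


/-- Scaling invariance of case D of the G-RDC equation
u_t = (a·x²·u·u_x)_x + x·u·u_x + u under x ↦ λx. -/
theorem stmt_16 (a b : ℝ) (u : ℝ → ℝ → ℝ)
    (hu : ContDiffOn ℝ 2 (fun p : ℝ × ℝ => u p.1 p.2) (Set.Ioi 0 ×ˢ Set.univ))
    (hpde : ∀ x : ℝ, 0 < x → ∀ t : ℝ,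
      deriv (fun t' => u x t') t
        = deriv (fun x' => a * x' ^ 2 * u x' t * deriv (fun y => u y t) x') x
          + x * u x t * deriv (fun x' => u x' t) x + u x t)
    (lam : ℝ) (hlam : 0 < lam) :
    ∀ x : ℝ, 0 < x → ∀ t : ℝ,
      deriv (fun t' => u (lam * x) t') t
        = deriv (fun x' => a * x' ^ 2 * u (lam * x') t
              * deriv (fun y => u (lam * y) t) x') x
          + x * u (lam * x) t * deriv (fun x' => u (lam * x') t) x
          + u (lam * x) t := by
  intro x hx t
  have hopen : IsOpen (Set.Ioi (0:ℝ)) := isOpen_Ioi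
  set f : ℝ → ℝ := fun y => u y t with hf_def
  have hmap : Set.MapsTo (fun y : ℝ => (y, t)) (Set.Ioi 0)
      (Set.Ioi 0 ×ˢ Set.univ) := fun y hy => ⟨hy, trivial⟩
  have hf : ContDiffOn ℝ 2 f (Set.Ioi 0) :=
    hu.comp ((contDiff_id.prodMk contDiff_const).contDiffOn) hmap
  have hfd : ∀ y : ℝ, 0 < y → DifferentiableAt ℝ f y := fun y hy =>
    (hf.differentiableOn (by norm_num)).differentiableAt (hopen.mem_nhds hy)
  have hf1 : ContDiffOn ℝ 1 (deriv f) (Set.Ioi 0) :=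
    hf.deriv_of_isOpen hopen (by norm_num)
  have hfd' : ∀ y : ℝ, 0 < y → DifferentiableAt ℝ (deriv f) y := fun y hy =>
    (hf1.differentiableOn (by norm_num)).differentiableAt (hopen.mem_nhds hy)
  -- chain rule
  have key : ∀ y : ℝ, 0 < y →
      deriv (fun z => f (lam * z)) y = lam * deriv f (lam * y) := by
    intro y hy
    have h1 : DifferentiableAt ℝ f (lam * y) := hfd _ (mul_pos hlam hy)
    have h2 : DifferentiableAt ℝ (fun z : ℝ => lam * z) y :=
      differentiableAt_id.const_mul lam
    have h3 := deriv_comp y h1 h2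
    have h4 : deriv (fun z : ℝ => lam * z) y = lam := by
      simpa using deriv_const_mul_field (v := fun z : ℝ => z) (x := y) lam
    rw [h4] at h3
    simpa [Function.comp_def, mul_comm] using h3
  set G : ℝ → ℝ := fun X => a * X ^ 2 * u X t * deriv (fun y => u y t) X with hG_def
  have hGd : DifferentiableAt ℝ G (lam * x) := by
    have hlx : 0 < lam * x := mul_pos hlam hx
    exact (((differentiableAt_const a).mul (differentiableAt_pow 2)).mul
      (hfd _ hlx)).mul (hfd' _ hlx)
  have hψ : DifferentiableAt ℝ (fun x' : ℝ => G (lam * x')) x :=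
    hGd.comp x (differentiableAt_id.const_mul lam)
  have hψderiv : deriv (fun x' : ℝ => G (lam * x')) x = deriv G (lam * x) * lam := by
    have h3 := deriv_comp x hGd (differentiableAt_id.const_mul lam)
    have h4 : deriv (fun z : ℝ => lam * z) x = lam := by
      simpa using deriv_const_mul_field (v := fun z : ℝ => z) (x := x) lam
    rw [h4] at h3
    simpa [Function.comp_def] using h3
  have heq : (fun x' => a * x' ^ 2 * u (lam * x') t
        * deriv (fun y => u (lam * y) t) x')
      =ᶠ[nhds x] fun x' => (1 / lam) * G (lam * x') := by
    filter_upwards [hopen.mem_nhds hx] with y hy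
    have hy' : (0:ℝ) < y := hy
    rw [show (fun y' => u (lam * y') t) = (fun z => f (lam * z)) from rfl, key y hy']
    simp only [hG_def]
    field_simp
    ring
  have hderiv1 : deriv (fun x' => a * x' ^ 2 * u (lam * x') t
        * deriv (fun y => u (lam * y) t) x') x = deriv G (lam * x) := by
    rw [heq.deriv_eq, deriv_const_mul _ hψ, hψderiv]
    field_simp
  have hpde' := hpde (lam * x) (mul_pos hlam hx) t
  rw [hderiv1]
  rw [show (fun x' => u (lam * x') t) = (fun z => f (lam * z)) from rfl, key x hx]
  rw [hpde']
  ring
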